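/- For a twisted R-Poisson manifold (M,Π,R,H) and the canonical induced E_n-connection with the H-twisted (n+1)-ary Koszul bracket, the E_n-polytorsion equals T^{∇^{E_n}} = −∇̊R − ⟨Π^{⊗(n+1)},H⟩, i.e., in components −(1/n!)(∇̊_ν R^{μ₁…μ_{n+1}} − H_ν{}^{μ₁…μ_{n+1}}) contracted with the arguments, where H_ν{}^{μ₁…μ_{n+1}} = Π^{μ₁ν₁}…Π^{μ_{n+1}ν_{n+1}} H_{ν ν₁…ν_{n+1}} up to sign convention. -/

import Mathlib

open scoped BigOperators

noncomputable section

/-- Points of the local chart. -/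
abbrev Pt (d : ℕ) := Fin d → ℝ

/-- Partial derivative `∂_i f` at `x`. -/
def pd {d : ℕ} (i : Fin d) (f : Pt d → ℝ) (x : Pt d) : ℝ :=
  fderiv ℝ f x (Pi.single i 1)

/-- Lie derivative of a 1-form `e` along a vector field `X`:
`(L_X e)_μ = X^ν ∂_ν e_μ + e_ν ∂_μ X^ν`. -/
def lieD {d : ℕ} (X e : Pt d → Fin d → ℝ) : Pt d → Fin d → ℝ :=
  fun x μ => ∑ ν, (X x ν * pd ν (fun y => e y μ) x + e x ν * pd μ (fun y => X y ν) x)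

/-- Action of a vector field on a function, `X f = X^ν ∂_ν f`. -/
def act {d : ℕ} (X : Pt d → Fin d → ℝ) (f : Pt d → ℝ) (x : Pt d) : ℝ :=
  ∑ ν, X x ν * pd ν f x

/-- The vector field `Π(e)`, `(Π(e))^ν = Π^{μν} e_μ`. -/
def sharp {d : ℕ} (P : Pt d → Fin d → Fin d → ℝ) (e : Pt d → Fin d → ℝ) :
    Pt d → Fin d → ℝ :=
  fun x ν => ∑ μ, P x μ ν * e x μ

/-- Full contraction `Π(e,e') = Π^{μν} e_μ e'_ν`. -/
def pairP {d : ℕ} (P : Pt d → Fin d → Fin d → ℝ) (e e' : Pt d → Fin d → ℝ) :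
    Pt d → ℝ :=
  fun x => ∑ μ, ∑ ν, P x μ ν * e x μ * e' x ν

/-- The Koszul bracket `b₂(e,e') = L_{Π(e)}e' − L_{Π(e')}e − d(Π(e,e'))`. -/
def kb {d : ℕ} (P : Pt d → Fin d → Fin d → ℝ) (e e' : Pt d → Fin d → ℝ) :
    Pt d → Fin d → ℝ :=
  fun x μ => lieD (sharp P e) e' x μ - lieD (sharp P e') e x μ - pd μ (pairP P e e') x

/-- Interior product with the de Rham differential: `(ι_X de)_μ = X^ν(∂_ν e_μ − ∂_μ e_ν)`. -/
def iotaD {d : ℕ} (X e : Pt d → Fin d → ℝ) : Pt d → Fin d → ℝ :=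
  fun x μ => ∑ ν, X x ν * (pd ν (fun y => e y μ) x - pd μ (fun y => e y ν) x)

/-- The de Rham differential of a function, as a 1-form. -/
def dF {d : ℕ} (f : Pt d → ℝ) : Pt d → Fin d → ℝ := fun x μ => pd μ f x

/-- The anchor map of the `(n+1)`-vector `R` on decomposable `n`-forms:
`R(e₁∧…∧eₙ)^ν = R^{μ₁…μₙν} e₁_{μ₁}…eₙ_{μₙ}`. -/
def Rc {d n : ℕ} (R : Pt d → (Fin (n+1) → Fin d) → ℝ)
    (f : Fin n → (Pt d → Fin d → ℝ)) : Pt d → Fin d → ℝ :=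
  fun x ν => ∑ μ : Fin n → Fin d, R x (Fin.snoc μ ν) * ∏ i, f i x (μ i)

/-- Full contraction `R(e^{(1)},…,e^{(n+1)}) = R^{μ₁…μ_{n+1}} e^{(1)}_{μ₁}…e^{(n+1)}_{μ_{n+1}}`. -/
def Rfull {d n : ℕ} (R : Pt d → (Fin (n+1) → Fin d) → ℝ)
    (e : Fin (n+1) → (Pt d → Fin d → ℝ)) : Pt d → ℝ :=
  fun x => ∑ μ : Fin (n+1) → Fin d, R x μ * ∏ i, e i x (μ i)

/-- Total antisymmetry of the component functions of a multivector field. -/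
def Antisym {d m : ℕ} (R : Pt d → (Fin m → Fin d) → ℝ) : Prop :=
  ∀ (x : Pt d) (σ : Equiv.Perm (Fin m)) (μ : Fin m → Fin d),
    R x (μ ∘ σ) = ((Equiv.Perm.sign σ : ℤ) : ℝ) * R x μ

/-- Smoothness of (the components of) a 1-form. -/
def SmForm {d : ℕ} (e : Pt d → Fin d → ℝ) : Prop := ∀ μ, ContDiff ℝ (⊤ : ℕ∞) (fun x => e x μ)

/-- Smoothness of the components of a multivector field. -/
def SmMV {d m : ℕ} (R : Pt d → (Fin m → Fin d) → ℝ) : Prop :=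
  ∀ μ, ContDiff ℝ (⊤ : ℕ∞) (fun x => R x μ)

/-- Covariant derivative of a 1-form along a vector field,
`(∇_X e)_λ = X^μ(∂_μ e_λ − Γ^ρ_{μλ} e_ρ)`. -/
def covd {d : ℕ} (Γ : Pt d → Fin d → Fin d → Fin d → ℝ)
    (X e : Pt d → Fin d → ℝ) : Pt d → Fin d → ℝ :=
  fun x lam => ∑ μ, X x μ * (pd μ (fun y => e y lam) x - ∑ ρ, Γ x ρ μ lam * e x ρ)

/-- The untwisted `(n+1)`-ary Koszul bracket (interior-product form). -/
def bKos {d n : ℕ} (R : Pt d → (Fin (n+1) → Fin d) → ℝ)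
    (e : Fin (n+1) → (Pt d → Fin d → ℝ)) : Pt d → Fin d → ℝ :=
  fun x μ =>
    (∑ r : Fin (n+1), (-1 : ℝ) ^ (n + r.val) * iotaD (Rc R (e ∘ r.succAbove)) (e r) x μ)
      + pd μ (Rfull R e) x

/-- The `H`-twist 1-form `H_{n+1}(e^{(1)},…,e^{(n+1)}) = H(Π(e^{(1)}),…,Π(e^{(n+1)}),·)`
(the free slot of the `(n+2)`-form written first; sign conventions as in the text). -/
def Htwist {d n : ℕ} (P : Pt d → Fin d → Fin d → ℝ)
    (H : Pt d → (Fin (n+2) → Fin d) → ℝ)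
    (e : Fin (n+1) → (Pt d → Fin d → ℝ)) : Pt d → Fin d → ℝ :=
  fun x lam => ∑ ν : Fin (n+1) → Fin d,
    H x (Fin.cons lam ν) * ∏ i, sharp P (e i) x (ν i)

/-- The `H`-twisted `(n+1)`-ary Koszul bracket `b^H_{n+1} = b_{n+1} − H_{n+1}`. -/
def bKosH {d n : ℕ} (P : Pt d → Fin d → Fin d → ℝ)
    (H : Pt d → (Fin (n+2) → Fin d) → ℝ)
    (R : Pt d → (Fin (n+1) → Fin d) → ℝ)
    (e : Fin (n+1) → (Pt d → Fin d → ℝ)) : Pt d → Fin d → ℝ :=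
  fun x μ => bKos R e x μ - Htwist P H e x μ

/-- The `E_n`-polytorsion of the canonical induced connection `•∇^{E_n}_ê = ∇_{R(ê)}`
with respect to the `H`-twisted bracket. -/
def polyTorsH {d n : ℕ} (Γ : Pt d → Fin d → Fin d → Fin d → ℝ)
    (P : Pt d → Fin d → Fin d → ℝ)
    (H : Pt d → (Fin (n+2) → Fin d) → ℝ)
    (R : Pt d → (Fin (n+1) → Fin d) → ℝ)
    (e : Fin (n+1) → (Pt d → Fin d → ℝ)) : Pt d → Fin d → ℝ :=
  fun x μ =>
    (∑ r : Fin (n+1), (-1 : ℝ) ^ (n + r.val) * covd Γ (Rc R (e ∘ r.succAbove)) (e r) x μ)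
      - bKosH P H R e x μ


/-! ### Auxiliary lemmas -/

section AuxLemmas

lemma pd_sum' {d : ℕ} {ι : Type*} (s : Finset ι) (f : ι → Pt d → ℝ) (i : Fin d) (x : Pt d)
    (h : ∀ j ∈ s, DifferentiableAt ℝ (f j) x) :
    pd i (fun y => ∑ j ∈ s, f j y) x = ∑ j ∈ s, pd i (f j) x := by
  unfold pd
  rw [fderiv_fun_sum h]
  simp

lemma pd_mul_prod' {d n : ℕ} (f : Pt d → ℝ) (g : Fin (n+1) → Pt d → ℝ) (i : Fin d) (x : Pt d)
    (hf : DifferentiableAt ℝ f x) (hg : ∀ j, DifferentiableAt ℝ (g j) x) :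
    pd i (fun y => f y * ∏ j, g j y) x
      = pd i f x * ∏ j, g j x
        + f x * ∑ j, pd i (g j) x * ∏ k ∈ Finset.univ.erase j, g k x := by
  have hprod : HasFDerivAt (fun y => ∏ j, g j y)
      (∑ j, (∏ k ∈ Finset.univ.erase j, g k x) • fderiv ℝ (g j) x) x :=
    HasFDerivAt.finset_prod (fun j _ => (hg j).hasFDerivAt)
  have hmul := hf.hasFDerivAt.mul hprod
  unfold pd
  rw [show (fun y => f y * ∏ j, g j y) = (f * fun y => ∏ j, g j y) from rfl, hmul.fderiv]
  simp [ContinuousLinearMap.sum_apply, Finset.mul_sum, mul_comm]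
  ring

lemma insertNth_eq_cons_comp {d n : ℕ} (r : Fin (n+1)) (ν : Fin d) (μ' : Fin n → Fin d) :
    (r.insertNth ν μ' : Fin (n+1) → Fin d)
      = (Fin.cons ν μ' : Fin (n+1) → Fin d) ∘ (Fin.cycleRange r) := by
  funext j
  refine r.succAboveCases ?_ ?_ j
  · simp [Fin.cycleRange_self]
  · intro k; simp [Fin.cycleRange_succAbove]

lemma prod_erase_eq_succAbove {n : ℕ} (f : Fin (n+1) → ℝ) (r : Fin (n+1)) :
    ∏ j ∈ Finset.univ.erase r, f j = ∏ k : Fin n, f (r.succAbove k) := by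
  rw [show Finset.univ.erase r = Finset.image r.succAbove Finset.univ by
    ext j
    simp only [Finset.mem_erase, Finset.mem_image, Finset.mem_univ, and_true, true_and]
    constructor
    · intro hj; exact (Fin.exists_succAbove_eq hj)
    · rintro ⟨k, rfl⟩; exact r.succAbove_ne k]
  exact Finset.prod_image (fun a _ b _ h => r.succAbove_right_injective h)

lemma sum_insertNth {d n : ℕ} {M : Type*} [AddCommMonoid M] (r : Fin (n+1))
    (F : (Fin (n+1) → Fin d) → M) :
    (∑ μvec : Fin (n+1) → Fin d, F μvec)
      = ∑ ν : Fin d, ∑ μ' : Fin n → Fin d, F (r.insertNth ν μ') := by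
  rw [← Equiv.sum_comp (Fin.insertNthEquiv (fun _ => Fin d) r) F, Fintype.sum_prod_type]
  rfl

lemma update_eq_insertNth {d n : ℕ} (r : Fin (n+1)) (ν : Fin d) (μvec : Fin (n+1) → Fin d) :
    Function.update μvec r ν = r.insertNth ν (fun j => μvec (r.succAbove j)) := by
  funext j
  refine r.succAboveCases ?_ ?_ j
  · simp
  · intro k; simp [Function.update_of_ne (r.succAbove_ne k)]

lemma R_snoc_sign {d n : ℕ} {R : Pt d → (Fin (n+1) → Fin d) → ℝ} (hR : Antisym R)
    (x : Pt d) (r : Fin (n+1)) (ν : Fin d) (μ' : Fin n → Fin d) :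
    (-1:ℝ)^(n + r.val) * R x (Fin.snoc μ' ν) = R x (r.insertNth ν μ') := by
  have key : ∀ s : Fin (n+1), R x (s.insertNth ν μ') = (-1:ℝ)^(s.val) * R x (Fin.cons ν μ') := by
    intro s
    rw [insertNth_eq_cons_comp, hR x (Fin.cycleRange s) (Fin.cons ν μ')]
    norm_num [Fin.sign_cycleRange]
  have h1 : R x (Fin.snoc μ' ν) = (-1:ℝ)^n * R x (Fin.cons ν μ') := by
    rw [← Fin.insertNth_last' ν μ', key (Fin.last n)]
    simp
  rw [h1, key r, pow_add]
  have hn2 : ((-1:ℝ)^n)*((-1:ℝ)^n) = 1 := by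
    rw [← pow_add, ← two_mul, pow_mul]; norm_num
  linear_combination ((-1:ℝ)^(r.val) * R x (Fin.cons ν μ')) * hn2

lemma sum_comm3 {α β γ M : Type*} [Fintype α] [Fintype β] [Fintype γ] [AddCommMonoid M]
    (f : α → β → γ → M) :
    ∑ a, ∑ b, ∑ c, f a b c = ∑ c, ∑ b, ∑ a, f a b c :=
  calc ∑ a, ∑ b, ∑ c, f a b c
      = ∑ b, ∑ a, ∑ c, f a b c := Finset.sum_comm
    _ = ∑ b, ∑ c, ∑ a, f a b c := Finset.sum_congr rfl fun b _ => Finset.sum_comm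
    _ = ∑ c, ∑ b, ∑ a, f a b c := Finset.sum_comm

lemma termA {d n : ℕ} (R : Pt d → (Fin (n+1) → Fin d) → ℝ) (hR : Antisym R)
    (e : Fin (n+1) → (Pt d → Fin d → ℝ)) (x : Pt d) (lam : Fin d) :
    (∑ r : Fin (n+1), (-1:ℝ)^(n + r.val) *
        ∑ μ, Rc R (e ∘ r.succAbove) x μ * pd lam (fun y => e r y μ) x)
      = ∑ μvec : Fin (n+1) → Fin d, R x μvec *
          ∑ i, pd lam (fun y => e i y (μvec i)) x * ∏ k ∈ Finset.univ.erase i, e k x (μvec k) := by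
  have step : ∀ r : Fin (n+1),
      (-1:ℝ)^(n + r.val) * ∑ μ, Rc R (e ∘ r.succAbove) x μ * pd lam (fun y => e r y μ) x
        = ∑ μvec : Fin (n+1) → Fin d, R x μvec *
            ((∏ j, e (r.succAbove j) x (μvec (r.succAbove j)))
              * pd lam (fun y => e r y (μvec r)) x) := by
    intro r
    rw [sum_insertNth r, Finset.mul_sum]
    refine Finset.sum_congr rfl fun ν _ => ?_
    simp only [Rc, Function.comp_apply, Fin.insertNth_apply_same, Fin.insertNth_apply_succAbove]
    rw [Finset.sum_mul, Finset.mul_sum]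
    refine Finset.sum_congr rfl fun μ' _ => ?_
    linear_combination ((∏ j, e (r.succAbove j) x (μ' j))
      * pd lam (fun y => e r y ν) x) * (R_snoc_sign hR x r ν μ')
  rw [Finset.sum_congr rfl fun r _ => step r, Finset.sum_comm]
  refine Finset.sum_congr rfl fun μvec _ => ?_
  rw [Finset.mul_sum]
  refine Finset.sum_congr rfl fun i _ => ?_
  rw [prod_erase_eq_succAbove (fun k => e k x (μvec k)) i]
  ring

lemma termB {d n : ℕ} (Γ : Pt d → Fin d → Fin d → Fin d → ℝ)
    (hΓsym : ∀ x m a b, Γ x m a b = Γ x m b a)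
    (R : Pt d → (Fin (n+1) → Fin d) → ℝ) (hR : Antisym R)
    (e : Fin (n+1) → (Pt d → Fin d → ℝ)) (x : Pt d) (lam : Fin d) :
    (∑ r : Fin (n+1), (-1:ℝ)^(n + r.val) *
        ∑ μ, Rc R (e ∘ r.succAbove) x μ * ∑ ρ, Γ x ρ μ lam * e r x ρ)
      = ∑ μvec : Fin (n+1) → Fin d,
          (∑ i, ∑ ν, Γ x (μvec i) lam ν * R x (Function.update μvec i ν))
            * ∏ i, e i x (μvec i) := by
  have step : ∀ r : Fin (n+1),
      (-1:ℝ)^(n + r.val) * ∑ μ, Rc R (e ∘ r.succAbove) x μ * ∑ ρ, Γ x ρ μ lam * e r x ρ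
        = ∑ μvec : Fin (n+1) → Fin d,
            (∑ ν, Γ x (μvec r) lam ν * R x (Function.update μvec r ν))
              * ∏ i, e i x (μvec i) := by
    intro r
    rw [sum_insertNth r]
    -- LHS: expand everything into a triple sum ∑ μ, ∑ μ', ∑ ρ
    have lhs_eq : (-1:ℝ)^(n + r.val) *
        ∑ μ, Rc R (e ∘ r.succAbove) x μ * ∑ ρ, Γ x ρ μ lam * e r x ρ
        = ∑ μ : Fin d, ∑ μ' : Fin n → Fin d, ∑ ρ : Fin d,
            (R x (r.insertNth μ μ') * (∏ j, e (r.succAbove j) x (μ' j)))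
              * (Γ x ρ μ lam * e r x ρ) := by
      rw [Finset.mul_sum]
      refine Finset.sum_congr rfl fun μ _ => ?_
      simp only [Rc, Function.comp_apply]
      rw [Finset.sum_mul, Finset.mul_sum]
      refine Finset.sum_congr rfl fun μ' _ => ?_
      rw [Finset.mul_sum, Finset.mul_sum]
      refine Finset.sum_congr rfl fun ρ _ => ?_
      linear_combination ((∏ j, e (r.succAbove j) x (μ' j))
        * (Γ x ρ μ lam * e r x ρ)) * (R_snoc_sign hR x r μ μ')
    rw [lhs_eq, sum_comm3]
    refine Finset.sum_congr rfl fun ρ _ => ?_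
    refine Finset.sum_congr rfl fun μ' _ => ?_
    -- RHS summand at μvec = insertNth r ρ μ'
    have hupd : ∀ ν, Function.update (r.insertNth ρ μ' : Fin (n+1) → Fin d) r ν
        = r.insertNth ν μ' := by
      intro ν
      rw [update_eq_insertNth]
      congr 1
      funext j
      simp
    have hprod : (∏ i, e i x ((r.insertNth ρ μ' : Fin (n+1) → Fin d) i))
        = e r x ρ * ∏ j, e (r.succAbove j) x (μ' j) := by
      rw [Fin.prod_univ_succAbove (fun i => e i x ((r.insertNth ρ μ' : Fin (n+1) → Fin d) i)) r]
      simp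
    simp only [Fin.insertNth_apply_same, hupd, hprod]
    rw [Finset.sum_mul]
    refine Finset.sum_congr rfl fun ν _ => ?_
    rw [hΓsym x ρ lam ν]
    ring

  rw [Finset.sum_congr rfl fun r _ => step r, Finset.sum_comm]
  refine Finset.sum_congr rfl fun μvec _ => ?_
  rw [Finset.sum_mul]

lemma termC {d n : ℕ} (P : Pt d → Fin d → Fin d → ℝ)
    (H : Pt d → (Fin (n+2) → Fin d) → ℝ)
    (e : Fin (n+1) → (Pt d → Fin d → ℝ)) (x : Pt d) (lam : Fin d) :
    Htwist P H e x lam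
      = ∑ μvec : Fin (n+1) → Fin d,
          (∑ νvec : Fin (n+1) → Fin d,
              (∏ i, P x (μvec i) (νvec i)) * H x (Fin.cons lam νvec))
            * ∏ i, e i x (μvec i) := by
  simp only [Htwist, sharp]
  have expand : ∀ νvec : Fin (n+1) → Fin d,
      H x (Fin.cons lam νvec) * ∏ i, (∑ μ, P x μ (νvec i) * e i x μ)
        = ∑ μvec : Fin (n+1) → Fin d,
            ((∏ i, P x (μvec i) (νvec i)) * H x (Fin.cons lam νvec)) * ∏ i, e i x (μvec i) := by
    intro νvec
    rw [Fintype.prod_sum (fun i μ => P x μ (νvec i) * e i x μ), Finset.mul_sum]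
    refine Finset.sum_congr rfl fun μvec _ => ?_
    rw [Finset.prod_mul_distrib]
    ring
  rw [Finset.sum_congr rfl fun νvec _ => expand νvec, Finset.sum_comm]
  refine Finset.sum_congr rfl fun μvec _ => ?_
  rw [Finset.sum_mul]

lemma termD {d n : ℕ} (R : Pt d → (Fin (n+1) → Fin d) → ℝ) (hRsm : SmMV R)
    (e : Fin (n+1) → (Pt d → Fin d → ℝ)) (he : ∀ i, SmForm (e i)) (x : Pt d) (lam : Fin d) :
    pd lam (Rfull R e) x
      = (∑ μvec : Fin (n+1) → Fin d, pd lam (fun y => R y μvec) x * ∏ i, e i x (μvec i))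
        + ∑ μvec : Fin (n+1) → Fin d, R x μvec *
            ∑ i, pd lam (fun y => e i y (μvec i)) x * ∏ k ∈ Finset.univ.erase i, e k x (μvec k) := by
  have hdiffR : ∀ μvec, DifferentiableAt ℝ (fun y => R y μvec) x := fun μvec =>
    ((hRsm μvec).differentiable (by simp)).differentiableAt
  have hdiffe : ∀ (i : Fin (n+1)) (μ : Fin d), DifferentiableAt ℝ (fun y => e i y μ) x :=
    fun i μ => ((he i μ).differentiable (by simp)).differentiableAt
  have h0 : pd lam (Rfull R e) x
      = ∑ μvec : Fin (n+1) → Fin d,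
          pd lam (fun y => R y μvec * ∏ i, e i y (μvec i)) x := by
    unfold Rfull
    exact pd_sum' Finset.univ (fun μvec => fun y => R y μvec * ∏ i, e i y (μvec i)) lam x
      (fun μvec _ => (hdiffR μvec).mul
        ((HasFDerivAt.finset_prod (fun j _ => (hdiffe j (μvec j)).hasFDerivAt)).differentiableAt))
  rw [h0, ← Finset.sum_add_distrib]
  refine Finset.sum_congr rfl fun μvec _ => ?_
  exact pd_mul_prod' (fun y => R y μvec) (fun j y => e j y (μvec j)) lam x
    (hdiffR μvec) (fun j => hdiffe j (μvec j))

end AuxLemmas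

/-- on a twisted R-Poisson manifold `(M,Π,R,H)`, for the canonical
induced `E_n`-connection with the `H`-twisted `(n+1)`-ary Koszul bracket and a
torsion-free affine connection `∇ = ∇̊`, the `E_n`-polytorsion equals
`T^{∇^{E_n}} = −∇̊R − ⟨Π^{⊗(n+1)},H⟩`, i.e. in components
`−(∇̊_ν R^{μ₁…μ_{n+1}} − H_ν{}^{μ₁…μ_{n+1}})` contracted with the arguments, where
`H_ν{}^{μ₁…μ_{n+1}} = Π^{μ₁ν₁}…Π^{μ_{n+1}ν_{n+1}} H_{ν ν₁…ν_{n+1}}`. -/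
theorem polytorsion_twisted_RPoisson {d n : ℕ} (hn : 1 ≤ n)
    (Γ : Pt d → Fin d → Fin d → Fin d → ℝ)
    (hΓsm : ∀ m a b, ContDiff ℝ (⊤ : ℕ∞) (fun x => Γ x m a b))
    (hΓsym : ∀ x m a b, Γ x m a b = Γ x m b a)
    (P : Pt d → Fin d → Fin d → ℝ)
    (hPsm : ∀ μ ν, ContDiff ℝ (⊤ : ℕ∞) (fun x => P x μ ν))
    (hPskew : ∀ x μ ν, P x μ ν = - P x ν μ)
    (H : Pt d → (Fin (n+2) → Fin d) → ℝ)
    (hHsm : SmMV H) (hHanti : Antisym H)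
    (hHclosed : ∀ (x : Pt d) (lamvec : Fin (n+3) → Fin d),
      (∑ i : Fin (n+3), (-1 : ℝ) ^ (i : ℕ) *
        pd (lamvec i) (fun y => H y (lamvec ∘ i.succAbove)) x) = 0)
    (R : Pt d → (Fin (n+1) → Fin d) → ℝ)
    (hR : Antisym R) (hRsm : SmMV R)
    (e : Fin (n+1) → (Pt d → Fin d → ℝ)) (he : ∀ i, SmForm (e i)) :
    ∀ (x : Pt d) (lam : Fin d),
      polyTorsH Γ P H R e x lam
        = - ∑ μvec : Fin (n+1) → Fin d,
            ((pd lam (fun y => R y μvec) x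
                + ∑ i, ∑ ν, Γ x (μvec i) lam ν * R x (Function.update μvec i ν))
              - ∑ νvec : Fin (n+1) → Fin d,
                  (∏ i, P x (μvec i) (νvec i)) * H x (Fin.cons lam νvec))
            * ∏ i, e i x (μvec i) := by
  intro x lam
  have hsplit : ∀ r : Fin (n+1),
      covd Γ (Rc R (e ∘ r.succAbove)) (e r) x lam
        - iotaD (Rc R (e ∘ r.succAbove)) (e r) x lam
        = (∑ μ, Rc R (e ∘ r.succAbove) x μ * pd lam (fun y => e r y μ) x)
          - ∑ μ, Rc R (e ∘ r.succAbove) x μ * ∑ ρ, Γ x ρ μ lam * e r x ρ := by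
    intro r
    simp only [covd, iotaD]
    rw [← Finset.sum_sub_distrib, ← Finset.sum_sub_distrib]
    refine Finset.sum_congr rfl fun μ _ => ?_
    ring
  have hS : (∑ r : Fin (n+1), (-1:ℝ)^(n + r.val)
        * covd Γ (Rc R (e ∘ r.succAbove)) (e r) x lam)
      - (∑ r : Fin (n+1), (-1:ℝ)^(n + r.val)
        * iotaD (Rc R (e ∘ r.succAbove)) (e r) x lam)
      = (∑ r : Fin (n+1), (-1:ℝ)^(n + r.val) *
            ∑ μ, Rc R (e ∘ r.succAbove) x μ * pd lam (fun y => e r y μ) x)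
        - (∑ r : Fin (n+1), (-1:ℝ)^(n + r.val) *
            ∑ μ, Rc R (e ∘ r.succAbove) x μ * ∑ ρ, Γ x ρ μ lam * e r x ρ) := by
    rw [← Finset.sum_sub_distrib, ← Finset.sum_sub_distrib]
    refine Finset.sum_congr rfl fun r _ => ?_
    linear_combination ((-1:ℝ)^(n + r.val)) * (hsplit r)
  have key : polyTorsH Γ P H R e x lam
      = (∑ r : Fin (n+1), (-1:ℝ)^(n + r.val) *
            ∑ μ, Rc R (e ∘ r.succAbove) x μ * pd lam (fun y => e r y μ) x)
        - (∑ r : Fin (n+1), (-1:ℝ)^(n + r.val) *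
            ∑ μ, Rc R (e ∘ r.succAbove) x μ * ∑ ρ, Γ x ρ μ lam * e r x ρ)
        - pd lam (Rfull R e) x + Htwist P H e x lam := by
    simp only [polyTorsH, bKosH, bKos]
    linear_combination hS
  rw [key, termA R hR e x lam, termB Γ hΓsym R hR e x lam, termD R hRsm e he x lam,
    termC P H e x lam]
  simp only [← Finset.sum_neg_distrib, ← Finset.sum_sub_distrib, ← Finset.sum_add_distrib]
  exact Finset.sum_congr rfl fun μvec _ => by ring
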